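/- arXiv:1801.07390 — 3 statements merged into one kernel-verified Lean document; each statement's English description precedes it below -/
import Mathlib

section
/- Let X be a join restriction category. Then the category PSh_jr(X) of join restriction presheaves on X and natural transformations, with restriction of α : P ⟹ Q given componentwise by ᾱ_A(x) = x · (restriction of α_A(x)), is a join restriction category, with the join of a pairwise-compatible set S of natural transformations given componentwise by (⋁_{α∈S} α)_A(x) = ⋁_{α∈S} α_A(x). -/
open CategoryTheory Limits Opposite

universe w v u

namespace JRC

/-- A restriction structure on a category (Cockett–Lack). -/
structure RestrictionStructure (X : Type u) [Category.{v} X] where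
  rbar : ∀ {A B : X}, (A ⟶ B) → (A ⟶ A)
  r1 : ∀ {A B : X} (f : A ⟶ B), rbar f ≫ f = f
  r2 : ∀ {A B C : X} (f : A ⟶ B) (g : A ⟶ C), rbar f ≫ rbar g = rbar g ≫ rbar f
  r3 : ∀ {A B C : X} (f : A ⟶ B) (g : A ⟶ C), rbar (rbar f ≫ g) = rbar f ≫ rbar g
  r4 : ∀ {A B C : X} (f : A ⟶ B) (h : B ⟶ C), f ≫ rbar h = rbar (f ≫ h) ≫ f

namespace RestrictionStructure

variable {X : Type u} [Category.{v} X] (R : RestrictionStructure X)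

/-- The partial order on hom-sets : `f ≤ g` iff `f = g ∘ f̄`. -/
def rle {A B : X} (f g : A ⟶ B) : Prop := f = R.rbar f ≫ g

/-- Compatibility of parallel maps : `f ⌣ g` iff `f ∘ ḡ = g ∘ f̄`. -/
def compat {A B : X} (f g : A ⟶ B) : Prop := R.rbar g ≫ f = R.rbar f ≫ g

/-- Pairwise compatibility of a set of parallel maps. -/
def setCompat {A B : X} (T : Set (A ⟶ B)) : Prop := ∀ f ∈ T, ∀ g ∈ T, R.compat f g

end RestrictionStructure

/-- A join restriction structure (Guo): all pairwise-compatible sets of parallel maps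
have joins, satisfying (J1) and (J2). -/
structure JoinRestrictionStructure (X : Type u) [Category.{v} X] extends
    RestrictionStructure X where
  jn : ∀ {A B : X}, Set (A ⟶ B) → (A ⟶ B)
  jn_upper : ∀ {A B : X} (T : Set (A ⟶ B)), toRestrictionStructure.setCompat T →
    ∀ f ∈ T, toRestrictionStructure.rle f (jn T)
  jn_least : ∀ {A B : X} (T : Set (A ⟶ B)), toRestrictionStructure.setCompat T →
    ∀ g, (∀ f ∈ T, toRestrictionStructure.rle f g) → toRestrictionStructure.rle (jn T) g
  j1 : ∀ {A B : X} (T : Set (A ⟶ B)), toRestrictionStructure.setCompat T →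
    rbar (jn T) = jn ((fun f => rbar f) '' T)
  j2 : ∀ {A B C : X} (T : Set (A ⟶ B)), toRestrictionStructure.setCompat T →
    ∀ (g : C ⟶ A), g ≫ jn T = jn ((fun f => g ≫ f) '' T)

end JRC
namespace JRC

open CategoryTheory Limits Opposite

/-- A restriction presheaf on a restriction category (Garner–Lin): a presheaf `P` with,
for each `x ∈ P(A)`, a restriction idempotent `x̄ : A ⟶ A` satisfying (RP1)–(RP3). -/
structure RestrictionPresheaf (X : Type u) [Category.{v} X] (R : RestrictionStructure X) :
    Type max u v (w + 1) where
  P : Xᵒᵖ ⥤ Type w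
  pbar : ∀ {A : X}, P.obj (op A) → (A ⟶ A)
  pbar_idem : ∀ {A : X} (x : P.obj (op A)), R.rbar (pbar x) = pbar x
  rp1 : ∀ {A : X} (x : P.obj (op A)), P.map (pbar x).op x = x
  rp2 : ∀ {A B : X} (x : P.obj (op A)) (f : A ⟶ B),
    pbar (P.map (R.rbar f).op x) = R.rbar f ≫ pbar x
  rp3 : ∀ {A B : X} (x : P.obj (op A)) (g : B ⟶ A),
    g ≫ pbar x = pbar (P.map g.op x) ≫ g

namespace RestrictionPresheaf

variable {X : Type u} [Category.{v} X] {R : RestrictionStructure X}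

/-- The partial order on `P(A)` : `x ≤ y` iff `x = y · x̄`. -/
def ple (P : RestrictionPresheaf.{w} X R) {A : X} (x y : P.P.obj (op A)) : Prop :=
  x = P.P.map (P.pbar x).op y

/-- Compatibility of elements : `x ⌣ y` iff `x · ȳ = y · x̄`. -/
def pcompat (P : RestrictionPresheaf.{w} X R) {A : X} (x y : P.P.obj (op A)) : Prop :=
  P.P.map (P.pbar y).op x = P.P.map (P.pbar x).op y

/-- Pairwise compatibility of a set of elements of `P(A)`. -/
def psetCompat (P : RestrictionPresheaf.{w} X R) {A : X} (T : Set (P.P.obj (op A))) : Prop :=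
  ∀ x ∈ T, ∀ y ∈ T, P.pcompat x y

end RestrictionPresheaf

/-- A join restriction presheaf on a join restriction category: a restriction presheaf in
which every pairwise-compatible subset of each `P(A)` has a join, satisfying (JRP1), (JRP2). -/
structure JoinRestrictionPresheaf (X : Type u) [Category.{v} X]
    (J : JoinRestrictionStructure X) extends
    RestrictionPresheaf.{w} X J.toRestrictionStructure where
  pjn : ∀ {A : X}, Set (P.obj (op A)) → P.obj (op A)
  pjn_upper : ∀ {A : X} (T : Set (P.obj (op A))), toRestrictionPresheaf.psetCompat T →
    ∀ x ∈ T, toRestrictionPresheaf.ple x (pjn T)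
  pjn_least : ∀ {A : X} (T : Set (P.obj (op A))), toRestrictionPresheaf.psetCompat T →
    ∀ y, (∀ x ∈ T, toRestrictionPresheaf.ple x y) → toRestrictionPresheaf.ple (pjn T) y
  jrp1 : ∀ {A : X} (T : Set (P.obj (op A))), toRestrictionPresheaf.psetCompat T →
    pbar (pjn T) = J.jn ((fun x => pbar x) '' T)
  jrp2 : ∀ {A B : X} (T : Set (P.obj (op A))), toRestrictionPresheaf.psetCompat T →
    ∀ (g : B ⟶ A), P.map g.op (pjn T) = pjn ((fun x => P.map g.op x) '' T)

end JRC
namespace JRC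

open CategoryTheory Limits Opposite

variable {X : Type u} [Category.{v} X]

/-- The category `PSh_jr(X)` of join restriction presheaves on a join restriction
category `X`, with natural transformations as morphisms. -/
instance JoinRestrictionPresheaf.category (J : JoinRestrictionStructure X) :
    Category.{max u w} (JoinRestrictionPresheaf.{w} X J) where
  Hom P Q := P.P ⟶ Q.P
  id P := 𝟙 P.P
  comp {P Q R} f g :=
    show P.P ⟶ R.P from (show P.P ⟶ Q.P from f) ≫ (show Q.P ⟶ R.P from g)
  id_comp {P Q} f := @Category.id_comp (Xᵒᵖ ⥤ Type w) _ P.P Q.P f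
  comp_id {P Q} f := @Category.comp_id (Xᵒᵖ ⥤ Type w) _ P.P Q.P f
  assoc {P Q R T} f g h := @Category.assoc (Xᵒᵖ ⥤ Type w) _ P.P Q.P R.P T.P f g h

/-- A morphism of join restriction presheaves, as a natural transformation. -/
def jrHom {J : JoinRestrictionStructure X} {P Q : JoinRestrictionPresheaf.{w} X J}
    (α : P ⟶ Q) : P.P ⟶ Q.P := α

end JRC

namespace JRC
namespace Stmt15

open CategoryTheory Opposite

variable {X : Type u} [Category.{v} X]

section RS

variable (R : RestrictionStructure X)

lemma rbar_id (A : X) : R.rbar (𝟙 A) = 𝟙 A := by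
  have h := R.r1 (𝟙 A); simpa using h

lemma rbar_rbar {A B : X} (f : A ⟶ B) : R.rbar (R.rbar f) = R.rbar f := by
  have h := R.r3 f (𝟙 A)
  simpa [rbar_id] using h

lemma rbar_comp_self {A B : X} (f : A ⟶ B) : R.rbar f ≫ R.rbar f = R.rbar f := by
  have h := R.r1 (R.rbar f)
  rwa [rbar_rbar] at h

lemma idem_comm {A : X} {e f : A ⟶ A} (he : R.rbar e = e) (hf : R.rbar f = f) :
    e ≫ f = f ≫ e := by
  conv_lhs => rw [← he, ← hf]
  conv_rhs => rw [← he, ← hf]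
  exact R.r2 e f

lemma idem_comp_self {A : X} {e : A ⟶ A} (he : R.rbar e = e) : e ≫ e = e := by
  conv_lhs => rw [← he]
  conv_rhs => rw [← he]
  exact rbar_comp_self R e

lemma idem_compat {A : X} {e f : A ⟶ A} (he : R.rbar e = e) (hf : R.rbar f = f) :
    R.compat e f := by
  show R.rbar f ≫ e = R.rbar e ≫ f
  rw [he, hf]
  exact (idem_comm R he hf).symm

end RS

section P

variable {J : JoinRestrictionStructure X}

lemma map_map (F : Xᵒᵖ ⥤ Type w) {A B : Xᵒᵖ} {C : X} (f : unop B ⟶ C) (g : C ⟶ unop A)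
    (x : F.obj A) :
    F.map (f ≫ g).op x = F.map f.op (F.map g.op x) := by
  rw [op_comp, FunctorToTypes.map_comp_apply]

lemma map_comp_pbar (P : JoinRestrictionPresheaf.{w} X J) {A : Xᵒᵖ}
    (f : unop A ⟶ unop A) (x : P.P.obj A) :
    P.P.map (f ≫ P.pbar x).op x = P.P.map f.op x :=
  (map_map P.P f (P.pbar x) x).trans (congrArg (P.P.map f.op) (P.rp1 x))

lemma pbar_map_idem (P : JoinRestrictionPresheaf.{w} X J) {A : Xᵒᵖ}
    (x : P.P.obj A) {e : unop A ⟶ unop A} (he : J.rbar e = e) :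
    P.pbar (P.P.map e.op x) = e ≫ P.pbar x := by
  conv_lhs => rw [← he]
  rw [P.rp2 x e, he]

lemma app_map {P Q : JoinRestrictionPresheaf.{w} X J} (α : P.P ⟶ Q.P) {A : Xᵒᵖ}
    (e : unop A ⟶ unop A) (x : P.P.obj A) :
    α.app A (P.P.map e.op x) = Q.P.map e.op (α.app A x) := by
  have h := ConcreteCategory.congr_hom (α.naturality e.op) x
  simpa using h

/-- The componentwise restriction of a natural transformation. -/
def rbarNat {P Q : JoinRestrictionPresheaf.{w} X J} (α : P.P ⟶ Q.P) : P.P ⟶ P.P where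
  app A := TypeCat.ofHom fun x => P.P.map (Q.pbar (α.app A x)).op x
  naturality A B g := by
    refine ConcreteCategory.hom_ext _ _ (fun x => ?_)
    show P.P.map (Q.pbar (α.app B (P.P.map g.unop.op x))).op (P.P.map g.unop.op x)
        = P.P.map g.unop.op (P.P.map (Q.pbar (α.app A x)).op x)
    have hα : α.app B (P.P.map g.unop.op x) = Q.P.map g.unop.op (α.app A x) := by
      have h := ConcreteCategory.congr_hom (α.naturality g) x
      simpa using h
    rw [hα]
    have h3 := Q.rp3 (α.app A x) g.unop
    calc P.P.map (Q.pbar (Q.P.map g.unop.op (α.app A x))).op (P.P.map g.unop.op x)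
        = P.P.map ((Q.pbar (Q.P.map g.unop.op (α.app A x)) ≫ g.unop)).op x :=
          (map_map P.P _ g.unop x).symm
      _ = P.P.map ((g.unop ≫ Q.pbar (α.app A x))).op x := by rw [← h3]
      _ = P.P.map g.unop.op (P.P.map (Q.pbar (α.app A x)).op x) :=
          map_map P.P g.unop _ x

@[simp] lemma rbarNat_app {P Q : JoinRestrictionPresheaf.{w} X J} (α : P.P ⟶ Q.P)
    (A : Xᵒᵖ) (x : P.P.obj A) :
    (rbarNat α).app A x = P.P.map (Q.pbar (α.app A x)).op x := rfl

lemma pbar_pbar {P : JoinRestrictionPresheaf.{w} X J} {A : Xᵒᵖ} (x : P.P.obj A) :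
    J.rbar (P.pbar x) = P.pbar x := P.pbar_idem x

/-- Composition of two componentwise restrictions, computed explicitly. -/
lemma rbarNat_comp_app {P Q S : JoinRestrictionPresheaf.{w} X J}
    (α : P.P ⟶ Q.P) (β : P.P ⟶ S.P) (A : Xᵒᵖ) (x : P.P.obj A) :
    (rbarNat α).app A ((rbarNat β).app A x)
      = P.P.map (S.pbar (β.app A x) ≫ Q.pbar (α.app A x)).op x := by
  set f := S.pbar (β.app A x) with hf
  set e := Q.pbar (α.app A x) with he
  have hfi : J.rbar f = f := pbar_pbar _
  have hei : J.rbar e = e := pbar_pbar _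
  have h1 : α.app A (P.P.map f.op x) = Q.P.map f.op (α.app A x) := app_map α f x
  calc (rbarNat α).app A (P.P.map f.op x)
      = P.P.map (Q.pbar (α.app A (P.P.map f.op x))).op (P.P.map f.op x) := rfl
    _ = P.P.map (f ≫ e).op (P.P.map f.op x) := by
        rw [h1, pbar_map_idem Q (α.app A x) hfi]
    _ = P.P.map ((f ≫ e) ≫ f).op x := (map_map P.P _ f x).symm
    _ = P.P.map (f ≫ e).op x := by
        rw [Category.assoc, idem_comm J.toRestrictionStructure hei hfi, ← Category.assoc,
          idem_comp_self J.toRestrictionStructure hfi]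

lemma rbarNat_rbarNat {P Q : JoinRestrictionPresheaf.{w} X J} (α : P.P ⟶ Q.P) :
    rbarNat (rbarNat α) = rbarNat α := by
  apply NatTrans.ext
  funext A; refine ConcreteCategory.hom_ext _ _ (fun x => ?_)
  simp only [rbarNat_app]
  set e := Q.pbar (α.app A x) with he
  have hei : J.rbar e = e := pbar_pbar _
  rw [pbar_map_idem P x hei, map_comp_pbar]

/-- Compatibility of natural transformations, stated with functor-category composition. -/
def ncompat {P Q : JoinRestrictionPresheaf.{w} X J} (α β : P.P ⟶ Q.P) : Prop :=
  rbarNat β ≫ α = rbarNat α ≫ β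

lemma ncompat_component {P Q : JoinRestrictionPresheaf.{w} X J} {α β : P.P ⟶ Q.P}
    (h : ncompat α β) (A : Xᵒᵖ) (x : P.P.obj A) :
    Q.pcompat (α.app A x) (β.app A x) := by
  have h1 : α.app A ((rbarNat β).app A x) = β.app A ((rbarNat α).app A x) :=
    congrArg (fun γ => γ.app A x) h
  show Q.P.map (Q.pbar (β.app A x)).op (α.app A x)
      = Q.P.map (Q.pbar (α.app A x)).op (β.app A x)
  rw [← app_map α (Q.pbar (β.app A x)) x, ← app_map β (Q.pbar (α.app A x)) x]
  exact h1

def nsetCompat {P Q : JoinRestrictionPresheaf.{w} X J} (T : Set (P.P ⟶ Q.P)) : Prop :=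
  ∀ α ∈ T, ∀ β ∈ T, ncompat α β

/-- The componentwise set of values. -/
def jnSet {P Q : JoinRestrictionPresheaf.{w} X J} (T : Set (P.P ⟶ Q.P)) (A : Xᵒᵖ)
    (x : P.P.obj A) : Set (Q.P.obj A) :=
  {y | ∃ α ∈ T, y = α.app A x}

lemma jnSet_compat {P Q : JoinRestrictionPresheaf.{w} X J} {T : Set (P.P ⟶ Q.P)}
    (hT : nsetCompat T) (A : Xᵒᵖ) (x : P.P.obj A) :
    Q.psetCompat (A := unop A) (jnSet T A x) := by
  rintro y ⟨α, hα, rfl⟩ z ⟨β, hβ, rfl⟩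
  exact ncompat_component (hT α hα β hβ) A x

/-- The componentwise join of a set of natural transformations. -/
noncomputable def jnNat {P Q : JoinRestrictionPresheaf.{w} X J} (T : Set (P.P ⟶ Q.P)) :
    P.P ⟶ Q.P :=
  letI : Decidable (nsetCompat T) := Classical.propDecidable _
  if hT : nsetCompat T then
    { app := fun A => TypeCat.ofHom fun x => Q.pjn (jnSet T A x)
      naturality := by
        intro A B g
        refine ConcreteCategory.hom_ext _ _ (fun x => ?_)
        show Q.pjn (jnSet T B (P.P.map g x)) = Q.P.map g (Q.pjn (jnSet T A x))
        have h2 := Q.jrp2 (A := unop A) (jnSet T A x) (jnSet_compat hT A x) g.unop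
        have hset : ((fun y => Q.P.map g.unop.op y) '' jnSet T A x)
            = jnSet T B (P.P.map g x) := by
          ext y
          constructor
          · rintro ⟨z, ⟨α, hα, rfl⟩, rfl⟩
            exact ⟨α, hα, (ConcreteCategory.congr_hom (α.naturality g) x).symm⟩
          · rintro ⟨α, hα, rfl⟩
            exact ⟨α.app A x, ⟨α, hα, rfl⟩, (ConcreteCategory.congr_hom (α.naturality g) x).symm⟩
        calc Q.pjn (jnSet T B (P.P.map g x))
            = Q.pjn ((fun y => Q.P.map g.unop.op y) '' jnSet T A x) := by rw [hset]
          _ = Q.P.map g.unop.op (Q.pjn (jnSet T A x)) := h2.symm }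
  else
    { app := fun A => TypeCat.ofHom fun x => Q.pjn ∅
      naturality := by
        intro A B g
        refine ConcreteCategory.hom_ext _ _ (fun x => ?_)
        show Q.pjn ∅ = Q.P.map g (Q.pjn ∅)
        have h2 := Q.jrp2 (A := unop A) ∅ (by rintro y ⟨⟩) g.unop
        rw [Set.image_empty] at h2
        exact h2.symm }

lemma jnNat_app {P Q : JoinRestrictionPresheaf.{w} X J} {T : Set (P.P ⟶ Q.P)}
    (hT : nsetCompat T) (A : Xᵒᵖ) (x : P.P.obj A) :
    (jnNat T).app A x = Q.pjn (jnSet T A x) := by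
  unfold jnNat
  rw [dif_pos hT]
  rfl

lemma idem3 (R : RestrictionStructure X) {A : X} {e₁ e₂ c : A ⟶ A}
    (h1 : R.rbar e₁ = e₁) (h2 : R.rbar e₂ = e₂) (hc : R.rbar c = c) :
    (e₂ ≫ c) ≫ e₁ = (e₁ ≫ c) ≫ e₂ := by
  rw [Category.assoc, Category.assoc, idem_comm R hc h1, idem_comm R hc h2,
    ← Category.assoc, ← Category.assoc, idem_comm R h2 h1]

lemma rbar_comm {P Q S : JoinRestrictionPresheaf.{w} X J}
    (α : P.P ⟶ Q.P) (β : P.P ⟶ S.P) :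
    rbarNat β ≫ rbarNat α = rbarNat α ≫ rbarNat β := by
  apply NatTrans.ext; funext A; refine ConcreteCategory.hom_ext _ _ (fun x => ?_)
  show (rbarNat α).app A ((rbarNat β).app A x) = (rbarNat β).app A ((rbarNat α).app A x)
  rw [rbarNat_comp_app, rbarNat_comp_app,
    idem_comm J.toRestrictionStructure (pbar_pbar _) (pbar_pbar _)]

lemma ncompat_rbar {P Q S : JoinRestrictionPresheaf.{w} X J}
    (α : P.P ⟶ Q.P) (β : P.P ⟶ S.P) : ncompat (rbarNat α) (rbarNat β) := by
  unfold ncompat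
  rw [rbarNat_rbarNat, rbarNat_rbarNat]
  exact rbar_comm α β

lemma nsetCompat_rbar {P Q : JoinRestrictionPresheaf.{w} X J} (T : Set (P.P ⟶ Q.P)) :
    nsetCompat ((fun α => rbarNat α) '' T) := by
  rintro γ₁ ⟨α, hα, rfl⟩ γ₂ ⟨β, hβ, rfl⟩
  exact ncompat_rbar α β

lemma j1_lemma {P Q : JoinRestrictionPresheaf.{w} X J} {T : Set (P.P ⟶ Q.P)}
    (hT : nsetCompat T) :
    rbarNat (jnNat T) = jnNat ((fun α => rbarNat α) '' T) := by
  apply NatTrans.ext; funext A; refine ConcreteCategory.hom_ext _ _ (fun x => ?_)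
  have hS := jnSet_compat hT A x
  have hTr := nsetCompat_rbar (J := J) T
  -- the set of restriction idempotents of the values
  have hEc : J.toRestrictionStructure.setCompat
      ((fun y => Q.pbar y) '' jnSet T A x) := by
    rintro e₁ ⟨y, hy, rfl⟩ e₂ ⟨z, hz, rfl⟩
    exact idem_compat _ (pbar_pbar y) (pbar_pbar z)
  set E : Set (unop A ⟶ unop A) := (fun y => Q.pbar y) '' jnSet T A x with hEdef
  have he : J.rbar (J.jn E) = J.jn E := by
    rw [J.j1 E hEc]
    have himg : (fun f => J.rbar f) '' E = E := by
      ext c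
      constructor
      · rintro ⟨e', ⟨y, hy, rfl⟩, rfl⟩
        show J.rbar (Q.pbar y) ∈ E
        rw [pbar_pbar]
        exact ⟨y, hy, rfl⟩
      · rintro ⟨y, hy, rfl⟩
        exact ⟨Q.pbar y, ⟨y, hy, rfl⟩, pbar_pbar y⟩
    rw [himg]
  -- compatibility of the target set
  have hDc : P.psetCompat (A := unop A) (jnSet ((fun α => rbarNat α) '' T) A x) := by
    rintro d₁ ⟨γ₁, ⟨α, hα, rfl⟩, rfl⟩ d₂ ⟨γ₂, ⟨β, hβ, rfl⟩, rfl⟩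
    show P.P.map (P.pbar ((rbarNat β).app A x)).op ((rbarNat α).app A x)
        = P.P.map (P.pbar ((rbarNat α).app A x)).op ((rbarNat β).app A x)
    simp only [rbarNat_app]
    rw [pbar_map_idem P x (pbar_pbar _), pbar_map_idem P x (pbar_pbar _),
      ← map_map P.P _ _ x, ← map_map P.P _ _ x,
      idem3 J.toRestrictionStructure (pbar_pbar _) (pbar_pbar _) (pbar_pbar x)]
  -- upper bounds
  have hub : ∀ d ∈ jnSet ((fun α => rbarNat α) '' T) A x,
      P.ple d (P.P.map (J.jn E).op x) := by
    rintro d ⟨γ, ⟨α, hα, rfl⟩, rfl⟩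
    have hey : Q.pbar (α.app A x) ∈ E := ⟨α.app A x, ⟨α, hα, rfl⟩, rfl⟩
    have hle : Q.pbar (α.app A x)
        = J.rbar (Q.pbar (α.app A x)) ≫ J.jn E := J.jn_upper E hEc _ hey
    rw [pbar_pbar] at hle
    have h2 : Q.pbar (α.app A x) ≫ J.jn E = Q.pbar (α.app A x) := hle.symm
    show (rbarNat α).app A x
        = P.P.map (P.pbar ((rbarNat α).app A x)).op (P.P.map (J.jn E).op x)
    simp only [rbarNat_app]
    rw [pbar_map_idem P x (pbar_pbar _), ← map_map P.P _ _ x]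
    have hx : (Q.pbar (α.app A x) ≫ P.pbar x) ≫ J.jn E
        = Q.pbar (α.app A x) ≫ P.pbar x := by
      rw [Category.assoc, idem_comm J.toRestrictionStructure (pbar_pbar x) he,
        ← Category.assoc, h2]
    rw [hx, map_comp_pbar]
  have hleast := P.pjn_least (A := unop A) (jnSet ((fun α => rbarNat α) '' T) A x) hDc
    (P.P.map (J.jn E).op x) hub
  have hl : P.pjn (jnSet ((fun α => rbarNat α) '' T) A x)
      = P.P.map (P.pbar (P.pjn (jnSet ((fun α => rbarNat α) '' T) A x))).op
        (P.P.map (J.jn E).op x) := hleast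
  have hpbarD : P.pbar (P.pjn (jnSet ((fun α => rbarNat α) '' T) A x))
      = J.jn E ≫ P.pbar x := by
    rw [P.jrp1 (A := unop A) _ hDc]
    have himg : (fun z => P.pbar z) '' jnSet ((fun α => rbarNat α) '' T) A x
        = (fun f => P.pbar x ≫ f) '' E := by
      ext c
      constructor
      · rintro ⟨d, ⟨γ, ⟨α, hα, rfl⟩, rfl⟩, rfl⟩
        refine ⟨Q.pbar (α.app A x), ⟨α.app A x, ⟨α, hα, rfl⟩, rfl⟩, ?_⟩
        show P.pbar x ≫ Q.pbar (α.app A x) = P.pbar ((rbarNat α).app A x)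
        rw [rbarNat_app, pbar_map_idem P x (pbar_pbar _)]
        exact idem_comm J.toRestrictionStructure (pbar_pbar x) (pbar_pbar _)
      · rintro ⟨f, ⟨y, ⟨α, hα, rfl⟩, rfl⟩, rfl⟩
        refine ⟨(rbarNat α).app A x, ⟨rbarNat α, ⟨α, hα, rfl⟩, rfl⟩, ?_⟩
        show P.pbar ((rbarNat α).app A x) = P.pbar x ≫ Q.pbar (α.app A x)
        rw [rbarNat_app, pbar_map_idem P x (pbar_pbar _)]
        exact idem_comm J.toRestrictionStructure (pbar_pbar _) (pbar_pbar x)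
    rw [himg, ← J.j2 E hEc (P.pbar x)]
    exact idem_comm J.toRestrictionStructure (pbar_pbar x) he
  have hkey : P.pjn (jnSet ((fun α => rbarNat α) '' T) A x)
      = P.P.map (J.jn E).op x := by
    rw [hl, hpbarD, ← map_map P.P _ _ x]
    have h4 : (J.jn E ≫ P.pbar x) ≫ J.jn E = J.jn E ≫ P.pbar x := by
      rw [Category.assoc, idem_comm J.toRestrictionStructure (pbar_pbar x) he,
        ← Category.assoc, idem_comp_self J.toRestrictionStructure he]
    rw [h4, map_comp_pbar]
  show P.P.map (Q.pbar ((jnNat T).app A x)).op x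
      = (jnNat ((fun α => rbarNat α) '' T)).app A x
  rw [jnNat_app hT, jnNat_app hTr, Q.jrp1 (A := unop A) _ hS, hkey]

lemma j2_lemma {O P Q : JoinRestrictionPresheaf.{w} X J} {T : Set (P.P ⟶ Q.P)}
    (hT : nsetCompat T) (g : O.P ⟶ P.P) :
    g ≫ jnNat T = jnNat ((fun α => g ≫ α) '' T) := by
  have hTg : nsetCompat ((fun α => g ≫ α) '' T) := by
    rintro γ₁ ⟨α, hα, rfl⟩ γ₂ ⟨β, hβ, rfl⟩
    apply NatTrans.ext; funext A; refine ConcreteCategory.hom_ext _ _ (fun x => ?_)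
    show α.app A (g.app A (O.P.map (Q.pbar (β.app A (g.app A x))).op x))
        = β.app A (g.app A (O.P.map (Q.pbar (α.app A (g.app A x))).op x))
    rw [app_map g _ x, app_map g _ x, app_map α _ (g.app A x), app_map β _ (g.app A x)]
    exact ncompat_component (hT α hα β hβ) A (g.app A x)
  apply NatTrans.ext; funext A; refine ConcreteCategory.hom_ext _ _ (fun x => ?_)
  show (jnNat T).app A (g.app A x) = (jnNat ((fun α => g ≫ α) '' T)).app A x
  rw [jnNat_app hT, jnNat_app hTg]
  congr 1
  ext y
  constructor
  · rintro ⟨α, hα, rfl⟩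
    exact ⟨g ≫ α, ⟨α, hα, rfl⟩, rfl⟩
  · rintro ⟨γ, ⟨α, hα, rfl⟩, rfl⟩
    exact ⟨α, hα, rfl⟩

/-- The join restriction structure on join restriction presheaves. -/
noncomputable def mk (J : JoinRestrictionStructure X) :
    JoinRestrictionStructure (JoinRestrictionPresheaf.{w} X J) where
  rbar {P Q} α := rbarNat α
  r1 {P Q} α := by
    apply NatTrans.ext; funext A; refine ConcreteCategory.hom_ext _ _ (fun x => ?_)
    show α.app A (P.P.map (Q.pbar (α.app A x)).op x) = α.app A x
    rw [app_map α _ x, Q.rp1]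
  r2 {P Q S} α β := rbar_comm β α
  r3 {P Q S} α β := by
    apply NatTrans.ext; funext A; refine ConcreteCategory.hom_ext _ _ (fun x => ?_)
    show P.P.map (S.pbar (β.app A (P.P.map (Q.pbar (α.app A x)).op x))).op x
        = (rbarNat β).app A ((rbarNat α).app A x)
    rw [rbarNat_comp_app β α A x, app_map β _ x,
      pbar_map_idem S (β.app A x) (pbar_pbar _)]
  r4 {P Q S} α β := by
    apply NatTrans.ext; funext A; refine ConcreteCategory.hom_ext _ _ (fun x => ?_)
    show Q.P.map (S.pbar (β.app A (α.app A x))).op (α.app A x)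
        = α.app A (P.P.map (S.pbar (β.app A (α.app A x))).op x)
    exact (app_map α _ x).symm
  jn {P Q} T := jnNat T
  jn_upper {P Q} T hT α hα := by
    have hT' : nsetCompat T := fun a ha b hb => hT a ha b hb
    apply NatTrans.ext; funext A; refine ConcreteCategory.hom_ext _ _ (fun x => ?_)
    show α.app A x = (jnNat T).app A (P.P.map (Q.pbar (α.app A x)).op x)
    rw [app_map (jnNat T) _ x, jnNat_app hT']
    exact Q.pjn_upper (A := unop A) (jnSet T A x) (jnSet_compat hT' A x)
      (α.app A x) ⟨α, hα, rfl⟩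
  jn_least {P Q} T hT β hβ := by
    have hT' : nsetCompat T := fun a ha b hb => hT a ha b hb
    apply NatTrans.ext; funext A; refine ConcreteCategory.hom_ext _ _ (fun x => ?_)
    show (jnNat T).app A x
        = β.app A (P.P.map (Q.pbar ((jnNat T).app A x)).op x)
    rw [app_map β _ x]
    have hls := Q.pjn_least (A := unop A) (jnSet T A x) (jnSet_compat hT' A x)
      (β.app A x) ?_
    · rw [jnNat_app hT']
      exact hls
    · rintro y ⟨α, hα, rfl⟩
      have h1 : α.app A x = β.app A (P.P.map (Q.pbar (α.app A x)).op x) :=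
        congrArg (fun γ => γ.app A x) (hβ α hα)
      show α.app A x = Q.P.map (Q.pbar (α.app A x)).op (β.app A x)
      rw [← app_map β _ x]
      exact h1
  j1 {P Q} T hT := j1_lemma (fun a ha b hb => hT a ha b hb)
  j2 {P Q O} T hT g := j2_lemma (fun a ha b hb => hT a ha b hb) g

end P

end Stmt15
end JRC

open JRC CategoryTheory Opposite in
/-- The category `PSh_jr(X)` of join restriction presheaves on a join restriction
category `X` is itself a join restriction category, with restriction of `α : P ⟹ Q`
given componentwise by `ᾱ_A(x) = x · (α_A(x))‾` and joins of pairwise-compatible sets of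
natural transformations computed componentwise. -/
theorem stmt_15 {X : Type u} [Category.{v} X] (J : JoinRestrictionStructure X) :
    ∃ JP : JoinRestrictionStructure (JoinRestrictionPresheaf.{w} X J),
      (∀ (P Q : JoinRestrictionPresheaf.{w} X J) (α : P ⟶ Q) (A : X)
        (x : P.P.obj (op A)),
        (jrHom (JP.rbar α)).app (op A) x
          = P.P.map (Q.pbar ((jrHom α).app (op A) x)).op x) ∧
      (∀ (P Q : JoinRestrictionPresheaf.{w} X J) (T : Set (P ⟶ Q)),
        JP.toRestrictionStructure.setCompat T →
        ∀ (A : X) (x : P.P.obj (op A)),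
          (jrHom (JP.jn T)).app (op A) x
            = Q.pjn {y | ∃ α ∈ T, y = (jrHom α).app (op A) x}) := by
  refine ⟨JRC.Stmt15.mk J, ?_, ?_⟩
  · intro P Q α A x
    rfl
  · intro P Q T hT A x
    have h : JRC.Stmt15.nsetCompat (T : Set (P.P ⟶ Q.P)) :=
      fun a ha b hb => hT a ha b hb
    show (JRC.Stmt15.jnNat (T : Set (P.P ⟶ Q.P))).app (op A) x = _
    rw [JRC.Stmt15.jnNat_app h]
    rfl
end

section
/- Let X be a join restriction category, let P, Q be join restriction presheaves on X, and let α : P ⟹ Q be a natural transformation. Then for every object A and every pairwise-compatible subset S ⊆ P(A): α_A(⋁_{x∈S} x) = ⋁_{x∈S} α_A(x); that is, the components of natural transformations between join restriction presheaves preserve joins of compatible families. -/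
open CategoryTheory Limits Opposite

universe w v u

namespace JRCAux

open JRC CategoryTheory Opposite

universe w' v' u'

variable {X : Type u'} [Category.{v'} X]

lemma comm (R : RestrictionStructure X) {A : X} {e f : A ⟶ A}
    (he : R.rbar e = e) (hf : R.rbar f = f) : e ≫ f = f ≫ e := by
  calc e ≫ f = R.rbar e ≫ R.rbar f := by rw [he, hf]
    _ = R.rbar f ≫ R.rbar e := R.r2 e f
    _ = f ≫ e := by rw [he, hf]

lemma ridem (R : RestrictionStructure X) {A : X} {e f : A ⟶ A}
    (he : R.rbar e = e) (hf : R.rbar f = f) : R.rbar (e ≫ f) = e ≫ f := by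
  calc R.rbar (e ≫ f) = R.rbar (R.rbar e ≫ f) := by rw [he]
    _ = R.rbar e ≫ R.rbar f := R.r3 e f
    _ = e ≫ f := by rw [he, hf]

lemma compat_idem (R : RestrictionStructure X) {A : X} {e f : A ⟶ A}
    (he : R.rbar e = e) (hf : R.rbar f = f) : R.compat e f := by
  show R.rbar f ≫ e = R.rbar e ≫ f
  rw [he, hf]
  exact (comm R he hf).symm

variable {R : RestrictionStructure X}

lemma mapmap (Q : RestrictionPresheaf.{w'} X R) {A : X} (f g : A ⟶ A)
    (z : Q.P.obj (op A)) :
    Q.P.map (f ≫ g).op z = Q.P.map f.op (Q.P.map g.op z) := by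
  rw [op_comp, FunctorToTypes.map_comp_apply]

lemma pbar_map (Q : RestrictionPresheaf.{w'} X R) {A : X} (z : Q.P.obj (op A))
    {f : A ⟶ A} (hf : R.rbar f = f) :
    Q.pbar (Q.P.map f.op z) = f ≫ Q.pbar z := by
  have h := Q.rp2 z f
  rwa [hf] at h

end JRCAux

open JRC JRCAux CategoryTheory Opposite in
/-- Components of natural transformations between join restriction presheaves preserve
joins of pairwise-compatible families: `α_A(⋁_{x ∈ T} x) = ⋁_{x ∈ T} α_A(x)`. -/
theorem stmt_17 {X : Type u} [Category.{v} X] (J : JoinRestrictionStructure X)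
    (P Q : JoinRestrictionPresheaf.{w} X J) (α : P.P ⟶ Q.P) (A : X)
    (T : Set (P.P.obj (op A))) (hT : P.toRestrictionPresheaf.psetCompat T) :
    α.app (op A) (P.pjn T) = Q.pjn (α.app (op A) '' T) := by
  have nat : ∀ (x : P.P.obj (op A)) (f : A ⟶ A),
      α.app (op A) (P.P.map f.op x) = Q.P.map f.op (α.app (op A) x) := fun x f => by
    simpa using congr_fun (α.naturality f.op) x
  -- the restriction of α(x) factors through the restriction of x
  have pbarA : ∀ x : P.P.obj (op A),
      Q.pbar (α.app (op A) x) = P.pbar x ≫ Q.pbar (α.app (op A) x) := by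
    intro x
    have h1 : α.app (op A) x = Q.P.map (P.pbar x).op (α.app (op A) x) := by
      conv_lhs => rw [← P.rp1 x]
      rw [nat]
    conv_lhs => rw [h1]
    rw [pbar_map Q.toRestrictionPresheaf _ (P.pbar_idem x)]
  -- α is monotone
  have mono : ∀ x y : P.P.obj (op A), P.toRestrictionPresheaf.ple x y →
      Q.toRestrictionPresheaf.ple (α.app (op A) x) (α.app (op A) y) := by
    intro x y hxy
    have hxy' : α.app (op A) x = Q.P.map (P.pbar x).op (α.app (op A) y) := by
      conv_lhs => rw [hxy]
      rw [nat]
    show α.app (op A) x = Q.P.map (Q.pbar (α.app (op A) x)).op (α.app (op A) y)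
    calc α.app (op A) x
        = Q.P.map (Q.pbar (α.app (op A) x)).op (α.app (op A) x) := (Q.rp1 _).symm
      _ = Q.P.map (Q.pbar (α.app (op A) x)).op (Q.P.map (P.pbar x).op (α.app (op A) y)) := by
            rw [← hxy']
      _ = Q.P.map (Q.pbar (α.app (op A) x) ≫ P.pbar x).op (α.app (op A) y) :=
            (mapmap Q.toRestrictionPresheaf _ _ _).symm
      _ = Q.P.map (P.pbar x ≫ Q.pbar (α.app (op A) x)).op (α.app (op A) y) := by
            rw [comm J.toRestrictionStructure (Q.pbar_idem _) (P.pbar_idem _)]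
      _ = Q.P.map (Q.pbar (α.app (op A) x)).op (α.app (op A) y) := by rw [← pbarA x]
  -- key compatibility computation
  have key : ∀ x ∈ T, ∀ y ∈ T,
      Q.P.map (Q.pbar (α.app (op A) y)).op (α.app (op A) x)
        = Q.P.map (P.pbar x).op (α.app (op A) y) := by
    intro x hx y hy
    have hc := hT x hx y hy
    calc Q.P.map (Q.pbar (α.app (op A) y)).op (α.app (op A) x)
        = Q.P.map (Q.pbar (α.app (op A) y) ≫ P.pbar y).op (α.app (op A) x) := by
            conv_lhs => rw [pbarA y, comm J.toRestrictionStructure (P.pbar_idem y) (Q.pbar_idem _)]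
      _ = Q.P.map (Q.pbar (α.app (op A) y)).op (Q.P.map (P.pbar y).op (α.app (op A) x)) :=
            mapmap Q.toRestrictionPresheaf _ _ _
      _ = Q.P.map (Q.pbar (α.app (op A) y)).op (Q.P.map (P.pbar x).op (α.app (op A) y)) := by
            rw [← nat, hc, nat]
      _ = Q.P.map (Q.pbar (α.app (op A) y) ≫ P.pbar x).op (α.app (op A) y) :=
            (mapmap Q.toRestrictionPresheaf _ _ _).symm
      _ = Q.P.map (P.pbar x ≫ Q.pbar (α.app (op A) y)).op (α.app (op A) y) := by
            rw [comm J.toRestrictionStructure (Q.pbar_idem _) (P.pbar_idem _)]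
      _ = Q.P.map (P.pbar x).op (Q.P.map (Q.pbar (α.app (op A) y)).op (α.app (op A) y)) :=
            mapmap Q.toRestrictionPresheaf _ _ _
      _ = Q.P.map (P.pbar x).op (α.app (op A) y) := by rw [Q.rp1]
  -- the image of T under α is pairwise compatible
  have hS : Q.toRestrictionPresheaf.psetCompat (α.app (op A) '' T) := by
    rintro _ ⟨x, hx, rfl⟩ _ ⟨y, hy, rfl⟩
    show Q.P.map (Q.pbar (α.app (op A) y)).op (α.app (op A) x)
        = Q.P.map (Q.pbar (α.app (op A) x)).op (α.app (op A) y)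
    rw [key x hx y hy, key y hy x hx, ← nat, ← nat, hT x hx y hy]
  -- step 2 : ⋁(αT) ≤ α(⋁T)
  have hjs : Q.toRestrictionPresheaf.ple (Q.pjn (α.app (op A) '' T))
      (α.app (op A) (P.pjn T)) := by
    apply Q.pjn_least _ hS
    rintro _ ⟨x, hx, rfl⟩
    exact mono x _ (P.pjn_upper T hT x hx)
  have hj : Q.pjn (α.app (op A) '' T)
      = Q.P.map (Q.pbar (Q.pjn (α.app (op A) '' T))).op (α.app (op A) (P.pjn T)) := hjs
  -- step 3 : restriction comparison
  have hx_eq : ∀ x ∈ T, Q.P.map (P.pbar x).op (α.app (op A) (P.pjn T)) = α.app (op A) x := by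
    intro x hx
    rw [← nat]
    exact congrArg _ (P.pjn_upper T hT x hx).symm
  have pbar_ax : ∀ x ∈ T, Q.pbar (α.app (op A) x)
      = P.pbar x ≫ Q.pbar (α.app (op A) (P.pjn T)) := by
    intro x hx
    rw [← hx_eq x hx, pbar_map Q.toRestrictionPresheaf _ (P.pbar_idem x)]
  have hle1 : ∀ x ∈ T, Q.pbar (α.app (op A) x)
      = Q.pbar (α.app (op A) x) ≫ Q.pbar (Q.pjn (α.app (op A) '' T)) := by
    intro x hx
    have h := Q.pjn_upper _ hS (α.app (op A) x) ⟨x, hx, rfl⟩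
    have h' : α.app (op A) x
        = Q.P.map (Q.pbar (α.app (op A) x)).op (Q.pjn (α.app (op A) '' T)) := h
    conv_lhs => rw [h']
    rw [pbar_map Q.toRestrictionPresheaf _ (Q.pbar_idem _)]
  have hS0 : J.toRestrictionStructure.setCompat ((fun x => P.pbar x) '' T) := by
    rintro _ ⟨x, hx, rfl⟩ _ ⟨y, hy, rfl⟩
    exact compat_idem _ (P.pbar_idem x) (P.pbar_idem y)
  have hs_fix : Q.pbar (α.app (op A) (P.pjn T))
      = Q.pbar (α.app (op A) (P.pjn T)) ≫ P.pbar (P.pjn T) := by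
    conv_lhs => rw [pbarA (P.pjn T)]
    exact comm J.toRestrictionStructure (P.pbar_idem _) (Q.pbar_idem _)
  have hjn : Q.pbar (α.app (op A) (P.pjn T))
      = J.jn ((fun f => Q.pbar (α.app (op A) (P.pjn T)) ≫ f) '' ((fun x => P.pbar x) '' T)) := by
    rw [← J.j2 _ hS0, ← P.jrp1 T hT, ← hs_fix]
  have hE : J.toRestrictionStructure.setCompat
      ((fun f => Q.pbar (α.app (op A) (P.pjn T)) ≫ f) '' ((fun x => P.pbar x) '' T)) := by
    rintro _ ⟨_, ⟨x, hx, rfl⟩, rfl⟩ _ ⟨_, ⟨y, hy, rfl⟩, rfl⟩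
    exact compat_idem _ (ridem _ (Q.pbar_idem _) (P.pbar_idem x))
      (ridem _ (Q.pbar_idem _) (P.pbar_idem y))
  have hrle : Q.pbar (α.app (op A) (P.pjn T))
      = Q.pbar (α.app (op A) (P.pjn T)) ≫ Q.pbar (Q.pjn (α.app (op A) '' T)) := by
    have hbd : ∀ f ∈ ((fun f => Q.pbar (α.app (op A) (P.pjn T)) ≫ f) ''
        ((fun x => P.pbar x) '' T)),
        J.toRestrictionStructure.rle f (Q.pbar (Q.pjn (α.app (op A) '' T))) := by
      rintro _ ⟨_, ⟨x, hx, rfl⟩, rfl⟩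
      have e1 : Q.pbar (α.app (op A) (P.pjn T)) ≫ P.pbar x = Q.pbar (α.app (op A) x) := by
        rw [pbar_ax x hx]
        exact comm J.toRestrictionStructure (Q.pbar_idem _) (P.pbar_idem x)
      show Q.pbar (α.app (op A) (P.pjn T)) ≫ P.pbar x
          = J.toRestrictionStructure.rbar (Q.pbar (α.app (op A) (P.pjn T)) ≫ P.pbar x)
            ≫ Q.pbar (Q.pjn (α.app (op A) '' T))
      rw [ridem _ (Q.pbar_idem _) (P.pbar_idem x), e1]
      exact hle1 x hx
    have h := J.jn_least _ hE (Q.pbar (Q.pjn (α.app (op A) '' T))) hbd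
    have h' : Q.pbar (α.app (op A) (P.pjn T))
        = J.toRestrictionStructure.rbar (Q.pbar (α.app (op A) (P.pjn T)))
          ≫ Q.pbar (Q.pjn (α.app (op A) '' T)) := by
      rw [hjn]
      exact h
    rwa [Q.pbar_idem] at h'
  -- s = j·p̄s
  have h2 : Q.P.map (Q.pbar (α.app (op A) (P.pjn T))).op (Q.pjn (α.app (op A) '' T))
      = α.app (op A) (P.pjn T) := by
    calc Q.P.map (Q.pbar (α.app (op A) (P.pjn T))).op (Q.pjn (α.app (op A) '' T))
        = Q.P.map (Q.pbar (α.app (op A) (P.pjn T))).op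
            (Q.P.map (Q.pbar (Q.pjn (α.app (op A) '' T))).op (α.app (op A) (P.pjn T))) :=
          congrArg _ hj
      _ = Q.P.map (Q.pbar (α.app (op A) (P.pjn T)) ≫ Q.pbar (Q.pjn (α.app (op A) '' T))).op
            (α.app (op A) (P.pjn T)) := (mapmap Q.toRestrictionPresheaf _ _ _).symm
      _ = Q.P.map (Q.pbar (α.app (op A) (P.pjn T))).op (α.app (op A) (P.pjn T)) := by
            rw [← hrle]
      _ = α.app (op A) (P.pjn T) := Q.rp1 _
  refine Eq.symm ?_
  calc Q.pjn (α.app (op A) '' T)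
      = Q.P.map (Q.pbar (Q.pjn (α.app (op A) '' T))).op (α.app (op A) (P.pjn T)) := hj
    _ = Q.P.map (Q.pbar (Q.pjn (α.app (op A) '' T))).op
          (Q.P.map (Q.pbar (α.app (op A) (P.pjn T))).op (Q.pjn (α.app (op A) '' T))) :=
        congrArg _ h2.symm
    _ = Q.P.map (Q.pbar (Q.pjn (α.app (op A) '' T)) ≫ Q.pbar (α.app (op A) (P.pjn T))).op
          (Q.pjn (α.app (op A) '' T)) := (mapmap Q.toRestrictionPresheaf _ _ _).symm
    _ = Q.P.map (Q.pbar (α.app (op A) (P.pjn T)) ≫ Q.pbar (Q.pjn (α.app (op A) '' T))).op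
          (Q.pjn (α.app (op A) '' T)) := by
        rw [comm J.toRestrictionStructure (Q.pbar_idem _) (Q.pbar_idem _)]
    _ = Q.P.map (Q.pbar (α.app (op A) (P.pjn T))).op
          (Q.P.map (Q.pbar (Q.pjn (α.app (op A) '' T))).op (Q.pjn (α.app (op A) '' T))) :=
        mapmap Q.toRestrictionPresheaf _ _ _
    _ = Q.P.map (Q.pbar (α.app (op A) (P.pjn T))).op (Q.pjn (α.app (op A) '' T)) := by
        rw [Q.rp1]
    _ = α.app (op A) (P.pjn T) := h2
end

section
/- Let (C, M) be a small M-category satisfying conditions (G1)–(G3), and let J be the Grothendieck topology on C generated by the basis whose covers of C are the families {a_i : C_i → C}_{i∈I} with a_i ∈ M and ⋁_{i∈I} a_i = 1 in Sub_M(C). Let P be a J-sheaf and let μ : R ⟹ P be a monomorphism of presheaves such that for every object D and every morphism α : y(D) ⟹ P, the pullback of μ along α is of the form y(m) : y(C') ⟹ y(D) for some m : C' → D in M. Then R is a J-sheaf. -/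
open CategoryTheory Limits Opposite

universe w v u

namespace JRC

open CategoryTheory Limits Opposite

/-- A stable system of monics on a category: the `M` of an `M`-category (Cockett–Lack). -/
structure StableSystem (C : Type u) [Category.{v} C] where
  M : ∀ {A B : C}, (A ⟶ B) → Prop
  mono : ∀ {A B : C} (m : A ⟶ B), M m → Mono m
  iso : ∀ {A B : C} (m : A ⟶ B), IsIso m → M m
  comp : ∀ {A B D : C} (m : A ⟶ B) (n : B ⟶ D), M m → M n → M (m ≫ n)
  pullback : ∀ {A B D : C} (f : A ⟶ B) (m : D ⟶ B), M m →
    ∃ (P : C) (p : P ⟶ A) (q : P ⟶ D), M p ∧ IsPullback p q f m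

section Matching

variable {C : Type u} [Category.{v} C]

/-- A choice of pairwise pullbacks for a family of maps `m i : A i ⟶ X`, i.e. the data of
the matching diagram of the family. -/
structure MatchingData {ι : Type w} {A : ι → C} {X : C} (m : ∀ i, A i ⟶ X) where
  P : ι → ι → C
  p₁ : ∀ i j, P i j ⟶ A i
  p₂ : ∀ i j, P i j ⟶ A j
  isPB : ∀ i j, IsPullback (p₁ i j) (p₂ i j) (m i) (m j)

/-- `(U, a)` is a colimit of the matching diagram of the family `m` (with chosen
pullback data `D`). -/
structure IsMatchingColimit {ι : Type w} {A : ι → C} {X : C} {m : ∀ i, A i ⟶ X}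
    (D : MatchingData m) (U : C) (a : ∀ i, A i ⟶ U) : Prop where
  w : ∀ i j, D.p₁ i j ≫ a i = D.p₂ i j ≫ a j
  desc : ∀ {B : C} (b : ∀ i, A i ⟶ B), (∀ i j, D.p₁ i j ≫ b i = D.p₂ i j ≫ b j) →
    ∃! t : U ⟶ B, ∀ i, a i ≫ t = b i

/-- An `M`-category is *geometric* when: (1) every family of `M`-subobjects admits a colimit
`U = ⋃ᵢ Aᵢ` of its matching diagram; (2) the induced map `μ = ⋁ᵢ mᵢ : U ⟶ X` lies in `M`;
(3) this colimit is stable under pullback along any map `f : B ⟶ X`. -/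
def StableSystem.Geometric (S : StableSystem C) : Prop :=
  ∀ {ι : Type (max u v)} {A : ι → C} {X : C} (m : ∀ i, A i ⟶ X), (∀ i, S.M (m i)) →
    ∀ (D : MatchingData m),
      ∃ (U : C) (a : ∀ i, A i ⟶ U) (μ : U ⟶ X),
        IsMatchingColimit D U a ∧ (∀ i, a i ≫ μ = m i) ∧ S.M μ ∧
        ∀ {B : C} (f : B ⟶ X) {A' : ι → C} (m' : ∀ i, A' i ⟶ B) (q : ∀ i, A' i ⟶ A i),
          (∀ i, IsPullback (m' i) (q i) f (m i)) →
          ∀ {U' : C} (μ' : U' ⟶ B) (r : U' ⟶ U), IsPullback μ' r f μ →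
          ∀ (a' : ∀ i, A' i ⟶ U'), (∀ i, a' i ≫ μ' = m' i) → (∀ i, a' i ≫ r = q i ≫ a i) →
          ∀ (D' : MatchingData m'), IsMatchingColimit D' U' a'

end Matching

end JRC
namespace JRC

open CategoryTheory Limits Opposite

variable {C : Type u} [SmallCategory C]

/-- A presieve `R` on `X` is an *`M`-cover* when all its maps lie in `M` and
`⋁_{f ∈ R} f = 1` in `Sub_M(X)`, i.e. `X` is the colimit of the matching diagram of the
family `R` (with the maps of `R` as colimit injections). -/
def IsMCover (S : StableSystem C) (X : C) (R : Presieve X) : Prop :=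
  (∀ ⦃Y : C⦄ (f : Y ⟶ X), R f → S.M f) ∧
  ∀ D : MatchingData (A := fun p : (Σ Y : C, {f : Y ⟶ X // R f}) => p.1) (X := X)
      (fun p => p.2.1),
    IsMatchingColimit D X fun p => p.2.1

end JRC
namespace JRC

open CategoryTheory Limits Opposite

variable {C : Type u} [SmallCategory C]

/-- The Grothendieck topology on a small geometric `M`-category generated by the basis of
`M`-covers: the smallest Grothendieck topology in which every `M`-cover generates a
covering sieve.  (When `(C, M)` is geometric the `M`-covers form a basis, and a sieve is
then a covering sieve for this topology iff it contains an `M`-cover.) -/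
def mTopology (S : StableSystem C) (_hgeo : S.Geometric) : GrothendieckTopology C :=
  sInf {J : GrothendieckTopology C |
    ∀ (X : C) (R : Presieve X), IsMCover S X R → Sieve.generate R ∈ J X}

end JRC


namespace JRC

open CategoryTheory Limits Opposite

-- ## helpers
section Helpers

variable {C : Type u} [Category.{v} C]
variable {ι : Type w} {A : ι → C} {X : C}

/-- Index-free formulation of being the union (matching colimit) of a family. -/
def IsUnionOf (m : ∀ i, A i ⟶ X) (U : C) (a : ∀ i, A i ⟶ U) : Prop :=
  (∀ i j {Z : C} (u : Z ⟶ A i) (v : Z ⟶ A j), u ≫ m i = v ≫ m j → u ≫ a i = v ≫ a j) ∧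
  ∀ {B : C} (b : ∀ i, A i ⟶ B),
    (∀ i j {Z : C} (u : Z ⟶ A i) (v : Z ⟶ A j), u ≫ m i = v ≫ m j → u ≫ b i = v ≫ b j) →
    ∃! t : U ⟶ B, ∀ i, a i ≫ t = b i

lemma isMatchingColimit_iff_isUnionOf {m : ∀ i, A i ⟶ X} (D : MatchingData m)
    (U : C) (a : ∀ i, A i ⟶ U) :
    IsMatchingColimit D U a ↔ IsUnionOf m U a := by
  constructor
  · intro h
    constructor
    · intro i j Z u v huv
      have hl := (D.isPB i j).lift_fst u v huv
      have hr := (D.isPB i j).lift_snd u v huv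
      calc u ≫ a i = ((D.isPB i j).lift u v huv ≫ D.p₁ i j) ≫ a i := by rw [hl]
        _ = (D.isPB i j).lift u v huv ≫ D.p₂ i j ≫ a j := by
              rw [Category.assoc, h.w i j]
        _ = v ≫ a j := by rw [← Category.assoc, hr]
    · intro B b hb
      exact h.desc b fun i j => hb i j _ _ ((D.isPB i j).w)
  · rintro ⟨h1, h2⟩
    constructor
    · intro i j
      exact h1 i j _ _ ((D.isPB i j).w)
    · intro B b hb
      refine h2 b ?_
      intro i j Z u v huv
      have hl := (D.isPB i j).lift_fst u v huv
      have hr := (D.isPB i j).lift_snd u v huv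
      calc u ≫ b i = ((D.isPB i j).lift u v huv ≫ D.p₁ i j) ≫ b i := by rw [hl]
        _ = (D.isPB i j).lift u v huv ≫ D.p₂ i j ≫ b j := by
              rw [Category.assoc, hb i j]
        _ = v ≫ b j := by rw [← Category.assoc, hr]

lemma IsUnionOf.reindex {ι' : Type w} {A' : ι' → C} {m : ∀ i, A i ⟶ X}
    {m' : ∀ j, A' j ⟶ X} {U : C} {a : ∀ i, A i ⟶ U} (h : IsUnionOf m U a)
    (wit : ι' → ι) (hobj : ∀ j, A' j = A (wit j))
    (harr : ∀ j, m' j = eqToHom (hobj j) ≫ m (wit j))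
    (hsurj : ∀ i, ∃ j, ∃ e : A i = A' j, m i = eqToHom e ≫ m' j) :
    IsUnionOf m' U (fun j => eqToHom (hobj j) ≫ a (wit j)) := by
  choose σ e he using hsurj
  constructor
  · intro j₁ j₂ Z u v huv
    rw [harr j₁, harr j₂, ← Category.assoc, ← Category.assoc] at huv
    have := h.1 (wit j₁) (wit j₂) _ _ huv
    simpa [Category.assoc] using this
  · intro B b' hb'
    -- transported family
    set b : ∀ i, A i ⟶ B := fun i => eqToHom (e i) ≫ b' (σ i) with hbdef
    have hb : ∀ i j {Z : C} (u : Z ⟶ A i) (v : Z ⟶ A j),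
        u ≫ m i = v ≫ m j → u ≫ b i = v ≫ b j := by
      intro i j Z u v huv
      rw [he i, he j, ← Category.assoc, ← Category.assoc] at huv
      have := hb' (σ i) (σ j) _ _ huv
      simpa [hbdef, Category.assoc] using this
    obtain ⟨t, ht, htu⟩ := h.2 b hb
    have key : ∀ j, (eqToHom (hobj j) ≫ a (wit j)) ≫ t = b' j := by
      intro j
      rw [Category.assoc, ht (wit j)]
      -- need : eqToHom ≫ b (wit j) = b' j
      have harr2 : (eqToHom (hobj j) ≫ eqToHom (e (wit j))) ≫ m' (σ (wit j)) = 𝟙 _ ≫ m' j := by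
        rw [Category.assoc, ← he (wit j), ← harr j, Category.id_comp]
      have := hb' (σ (wit j)) j _ _ harr2
      simpa [hbdef, Category.assoc] using this
    refine ⟨t, key, ?_⟩
    intro t' ht'
    refine htu t' ?_
    intro i
    -- a i = eqToHom (e i) ≫ eqToHom (hobj (σ i)) ≫ a (wit (σ i))
    have harr3 : (eqToHom (e i) ≫ eqToHom (hobj (σ i))) ≫ m (wit (σ i)) = 𝟙 _ ≫ m i := by
      rw [Category.assoc, ← harr (σ i), ← he i, Category.id_comp]
    have hai : (eqToHom (e i) ≫ eqToHom (hobj (σ i))) ≫ a (wit (σ i)) = 𝟙 _ ≫ a i :=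
      h.1 (wit (σ i)) i _ _ harr3
    have := ht' (σ i)
    calc a i ≫ t' = (eqToHom (e i) ≫ eqToHom (hobj (σ i))) ≫ a (wit (σ i)) ≫ t' := by
          rw [← Category.assoc, hai, Category.id_comp]
      _ = eqToHom (e i) ≫ (eqToHom (hobj (σ i)) ≫ a (wit (σ i))) ≫ t' := by
          simp [Category.assoc]
      _ = eqToHom (e i) ≫ b' (σ i) := by rw [ht' (σ i)]
      _ = b i := rfl

end Helpers

section Cover
variable {C : Type u} [SmallCategory C]

lemma isMCover_pullback (S : StableSystem C) (hgeo : S.Geometric) {X Y : C} (f : Y ⟶ X)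
    {T : Presieve X} (hT : IsMCover S X T) :
    ∃ T' : Presieve Y, IsMCover S Y T' ∧ T'.FactorsThruAlong T f := by
  classical
  set ι := (Σ Z : C, {g : Z ⟶ X // T g}) with hι
  set m : ∀ i : ι, i.1 ⟶ X := fun i => i.2.1 with hm
  have hmM : ∀ i, S.M (m i) := fun i => hT.1 _ i.2.2
  -- pullbacks of the family along f
  choose Pb p q hpM hpPB using fun i : ι => S.pullback f (m i) (hmM i)
  -- matching data for the original family
  choose Q r₁ r₂ hr₁ hrPB using fun i j : ι => S.pullback (m i) (m j) (hmM j)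
  set D : MatchingData m := ⟨Q, r₁, r₂, hrPB⟩ with hD
  obtain ⟨U, a, μU, hcolim, hfact, hMμ, hstab⟩ := hgeo m hmM D
  have hX : IsMatchingColimit D X m := hT.2 D
  -- μU is iso
  obtain ⟨s, hs, -⟩ := hX.desc a hcolim.w
  have hw : ∀ i j, D.p₁ i j ≫ m i = D.p₂ i j ≫ m j := fun i j => (D.isPB i j).w
  have t1 : s ≫ μU = 𝟙 X := by
    obtain ⟨t0, ht0, ht0u⟩ := hX.desc m hw
    have e1 : s ≫ μU = t0 := ht0u _ (fun i => by rw [← Category.assoc, hs, hfact])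
    have e2 : 𝟙 X = t0 := ht0u _ (fun i => by rw [Category.comp_id])
    rw [e1, e2]
  have t2 : μU ≫ s = 𝟙 U := by
    obtain ⟨t0, ht0, ht0u⟩ := hcolim.desc a hcolim.w
    have e1 : μU ≫ s = t0 := ht0u _ (fun i => by rw [← Category.assoc, hfact, hs])
    have e2 : 𝟙 U = t0 := ht0u _ (fun i => by rw [Category.comp_id])
    rw [e1, e2]
  haveI : IsIso μU := ⟨s, t2, t1⟩
  -- pullback of μU along f is the identity of Y
  have hsq : IsPullback (𝟙 Y) (f ≫ inv μU) f μU :=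
    IsPullback.of_horiz_isIso ⟨by simp⟩
  -- matching data for the pulled-back family
  choose Q' r₁' r₂' hr₁' hrPB' using fun i j : ι => S.pullback (p i) (p j) (hpM j)
  set D₂ : MatchingData p := ⟨Q', r₁', r₂', hrPB'⟩ with hD₂
  have hstab2 : IsMatchingColimit D₂ Y p := by
    refine hstab f p q hpPB (𝟙 Y) (f ≫ inv μU) hsq p (fun i => Category.comp_id _) ?_ D₂
    intro i
    rw [← Category.assoc, (hpPB i).w, Category.assoc, ← hfact i, Category.assoc,
      IsIso.hom_inv_id, Category.comp_id]
  have hU : IsUnionOf p Y p := (isMatchingColimit_iff_isUnionOf D₂ Y p).mp hstab2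
  refine ⟨Presieve.ofArrows Pb p, ⟨?_, ?_⟩, ?_⟩
  · rintro Z g ⟨i⟩
    exact hpM i
  · intro D''
    let ι' := (Σ Z : C, {g : Z ⟶ Y // Presieve.ofArrows Pb p g})
    let n : ∀ j : ι', j.1 ⟶ Y := fun j => j.2.1
    have hwit : ∀ (Z : C) (g : Z ⟶ Y), Presieve.ofArrows Pb p g →
        ∃ i, ∃ e : Z = Pb i, g = eqToHom e ≫ p i := by
      rintro Z g ⟨i⟩
      exact ⟨i, rfl, by simp⟩
    choose wit hobj harr using fun j : ι' => hwit j.1 j.2.1 j.2.2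
    have hsurj : ∀ i, ∃ j : ι', ∃ e : Pb i = j.1, p i = eqToHom e ≫ n j :=
      fun i => ⟨⟨Pb i, p i, Presieve.ofArrows.mk i⟩, rfl, by simp; rfl⟩
    have := hU.reindex wit hobj harr hsurj
    have hfn : (fun j : ι' => eqToHom (hobj j) ≫ p (wit j)) = n :=
      funext fun j => (harr j).symm
    rw [hfn] at this
    exact (isMatchingColimit_iff_isUnionOf D'' Y n).mpr this
  · rintro Z g ⟨i⟩
    exact ⟨i.1, q i, m i, i.2.2, (hpPB i).w.symm⟩

end Cover
end JRC

open JRC CategoryTheory Opposite in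
/-- If `P` is a sheaf for the topology generated by the `M`-covers on a small geometric
`M`-category, and `μ : R ⟹ P` is a monomorphism of presheaves whose pullback along any
map `y(D) ⟹ P` is representable by a map of `M`, then `R` is also a sheaf. -/
theorem stmt_18 {C : Type u} [SmallCategory C] (S : StableSystem C) (hgeo : S.Geometric)
    (P R : Cᵒᵖ ⥤ Type u) (hP : Presieve.IsSheaf (mTopology S hgeo) P)
    (μ : R ⟶ P) (hmono : Mono μ)
    (hrep : ∀ (D : C) (α : yoneda.obj D ⟶ P),
      ∃ (C' : C) (m : C' ⟶ D), S.M m ∧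
        ∃ β : yoneda.obj C' ⟶ R, IsPullback β (yoneda.map m) μ α) :
    Presieve.IsSheaf (mTopology S hgeo) R := by
  classical
  let K : Coverage C :=
    { coverings := fun X => {T | IsMCover S X T}
      pullback := by
        intro X Y f T hT
        obtain ⟨T', h1, h2⟩ := isMCover_pullback S hgeo f hT
        exact ⟨T', h1, h2⟩ }
  have hK : mTopology S hgeo = Coverage.toGrothendieck K := by
    rw [Coverage.toGrothendieck_eq_sInf]
    unfold mTopology
    congr 1
  rw [hK, Presieve.isSheaf_coverage]
  rw [hK, Presieve.isSheaf_coverage] at hP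
  intro X T hT
  have hT' : IsMCover S X T := hT
  intro x hx
  -- push the family forward along μ
  let yfam : Presieve.FamilyOfElements P T := fun Z g hg => μ.app (op Z) (x g hg)
  have hyfam : yfam.Compatible := by
    intro Y₁ Y₂ Z g₁ g₂ f₁ f₂ h₁ h₂ hcomm
    dsimp only [yfam]
    rw [← FunctorToTypes.naturality, ← FunctorToTypes.naturality,
      hx g₁ g₂ h₁ h₂ hcomm]
  obtain ⟨s, hs, hsu⟩ := hP T hT yfam hyfam
  let α : yoneda.obj X ⟶ P := yonedaEquiv.symm s
  obtain ⟨C', mm, hmm, β, pb⟩ := hrep X α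
  have hMonoM : Mono mm := S.mono mm hmm
  -- the canonical family of the presieve T
  let ι := Σ Z : C, {g : Z ⟶ X // T g}
  let m : ∀ i : ι, i.1 ⟶ X := fun i => i.2.1
  let ξ : ∀ i : ι, yoneda.obj i.1 ⟶ R := fun i => yonedaEquiv.symm (x i.2.1 i.2.2)
  have hξ : ∀ i : ι, ξ i ≫ μ = yoneda.map (m i) ≫ α := by
    intro i
    apply yonedaEquiv.injective
    rw [yonedaEquiv_comp, Equiv.apply_symm_apply, ← yonedaEquiv_naturality,
      Equiv.apply_symm_apply]
    exact (hs (m i) i.2.2).symm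
  let l : ∀ i : ι, yoneda.obj i.1 ⟶ yoneda.obj C' :=
    fun i => pb.lift (ξ i) (yoneda.map (m i)) (hξ i)
  let g : ∀ i : ι, i.1 ⟶ C' := fun i => yoneda.preimage (l i)
  have hgm : ∀ i, g i ≫ mm = m i := by
    intro i
    apply yoneda.map_injective
    rw [Functor.map_comp, Functor.map_preimage, pb.lift_snd]
  have hgβ : ∀ i, yoneda.map (g i) ≫ β = ξ i := by
    intro i
    dsimp only [g]
    rw [Functor.map_preimage]
    exact pb.lift_fst _ _ _
  choose Q r₁ r₂ hr₁ hrPB using fun i j : ι => S.pullback (m i) (m j) (hT'.1 _ j.2.2)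
  have hX : IsMatchingColimit ⟨Q, r₁, r₂, hrPB⟩ X m := hT'.2 ⟨Q, r₁, r₂, hrPB⟩
  obtain ⟨t, ht, -⟩ := hX.desc g (by
    intro i j
    rw [← cancel_mono mm, Category.assoc, Category.assoc, hgm i, hgm j]
    exact (hrPB i j).w)
  have h1 : t ≫ mm = 𝟙 X := by
    obtain ⟨t0, ht0, ht0u⟩ := hX.desc m (fun i j => (hrPB i j).w)
    have e1 : t ≫ mm = t0 := ht0u _ (fun i => by rw [← Category.assoc, ht i, hgm i])
    have e2 : 𝟙 X = t0 := ht0u _ (fun i => Category.comp_id _)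
    rw [e1, e2]
  have key : ∀ r : R.obj (op X), x.IsAmalgamation r → μ.app (op X) r = s := by
    intro r hr
    apply hsu
    intro Z gZ hg
    have := FunctorToTypes.naturality μ gZ.op r
    rw [← this, hr gZ hg]
  have hamal : x.IsAmalgamation (yonedaEquiv (yoneda.map t ≫ β)) := by
    intro Z gZ hg
    have hnat : R.map gZ.op (yonedaEquiv (yoneda.map t ≫ β)) =
        yonedaEquiv (yoneda.map gZ ≫ yoneda.map t ≫ β) := yonedaEquiv_naturality _ _
    rw [hnat, ← Category.assoc, ← Functor.map_comp]
    have hgt : gZ ≫ t = g ⟨Z, gZ, hg⟩ := ht ⟨Z, gZ, hg⟩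
    rw [hgt, hgβ, Equiv.apply_symm_apply]
  refine ⟨yonedaEquiv (yoneda.map t ≫ β), hamal, ?_⟩
  intro r1 hr1
  have inj : Function.Injective (μ.app (op X)) := by
    have : Mono (μ.app (op X)) := (NatTrans.mono_iff_mono_app μ).mp hmono (op X)
    exact (mono_iff_injective _).mp this
  apply inj
  rw [key r1 hr1, key _ hamal]
end
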